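/- Let R > 0 and let π ≥ β ≥ γ ≥ 0. Set A = (−R, 0), Q = P_R(β), S = P_R(γ), D = (R, 0), four points in order on the upper semicircle with AD as diameter. Then (dist Q D)² = (dist Q S)² + (dist S D)² + 2 · (dist Q S) · (dist S D) · (dist A Q) / (2R). -/

import Mathlib

noncomputable def P (R θ : ℝ) : EuclideanSpace ℝ (Fin 2) :=
  (WithLp.equiv 2 (Fin 2 → ℝ)).symm ![R * Real.cos θ, R * Real.sin θ]

/-!
Writing the four points as `P R π, P R β, P R γ, P R 0`, every distance is a chord
`2 R sin(half the angle)`, with `dist A Q = 2 R cos (β / 2)`. With `x = (β - γ) / 2` and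
`y = γ / 2` the claim becomes `sin² (x + y) = sin² x + sin² y + 2 sin x sin y cos (x + y)`.
-/

open Real

theorem sin_add_sq (x y : ℝ) :
    sin (x + y) ^ 2 = sin x ^ 2 + sin y ^ 2 + 2 * sin x * sin y * cos (x + y) := by
  rw [sin_add, cos_add]
  linear_combination sin x ^ 2 * sin_sq_add_cos_sq y + sin y ^ 2 * sin_sq_add_cos_sq x

theorem dist_P_sq (R a b : ℝ) :
    dist (P R a) (P R b) ^ 2 = (2 * R * sin ((a - b) / 2)) ^ 2 := by
  have half_angle : sin ((a - b) / 2) ^ 2 = (1 - cos (a - b)) / 2 := by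
    rw [sin_sq_eq_half_sub]; ring_nf
  rw [EuclideanSpace.dist_eq, sq_sqrt (by positivity)]
  simp only [Fin.sum_univ_two, P, WithLp.equiv_symm_apply, WithLp.ofLp_toLp,
    Matrix.cons_val_zero, Matrix.cons_val_one, Real.dist_eq, sq_abs]
  rw [cos_sub] at half_angle
  linear_combination R ^ 2 * sin_sq_add_cos_sq a + R ^ 2 * sin_sq_add_cos_sq b - 4 * R ^ 2 * half_angle

theorem dist_P (R a b : ℝ) : dist (P R a) (P R b) = 2 * |R * sin ((a - b) / 2)| := by
  rw [← sqrt_sq dist_nonneg, dist_P_sq, sqrt_sq_eq_abs, mul_assoc, abs_mul, abs_two]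

theorem dist_P_of_le {R a b : ℝ} (hR : 0 ≤ R) (hba : b ≤ a) (hab : a - b ≤ 2 * π) :
    dist (P R a) (P R b) = 2 * R * sin ((a - b) / 2) := by
  have : 0 ≤ sin ((a - b) / 2) := sin_nonneg_of_nonneg_of_le_pi (by linarith) (by linarith)
  rw [dist_P, abs_of_nonneg (by positivity), mul_assoc]

theorem law_of_cosines_step (R β γ : ℝ) (hR : 0 < R)
    (hγ : 0 ≤ γ) (hβγ : γ ≤ β) (hβ : β ≤ Real.pi)
    (A Q S D : EuclideanSpace ℝ (Fin 2))
    (hA : A = P R Real.pi) (hQ : Q = P R β) (hS : S = P R γ) (hD : D = P R 0) :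
    (dist Q D) ^ 2 =
      (dist Q S) ^ 2 + (dist S D) ^ 2 +
        2 * dist Q S * dist S D * dist A Q / (2 * R) := by
  have hπ := pi_pos
  subst hA hQ hS hD
  rw [dist_P_of_le hR.le (by linarith) (by linarith), dist_P_of_le hR.le hβγ (by linarith),
    dist_P_of_le hR.le hγ (by linarith), dist_P_of_le hR.le hβ (by linarith),
    show (π - β) / 2 = π / 2 - β / 2 by ring, sin_pi_div_two_sub, sub_zero, sub_zero,
    show β / 2 = (β - γ) / 2 + γ / 2 by ring, mul_pow, sin_add_sq]
  field_simp
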